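/- If an acyclic matching M on a free chain complex with basis (C_*, Ω) matches every basis element (no critical cells), then C_* is acyclic: H_n(C_*) = 0 for all n. -/

import Mathlib

open Finset

universe u

/-- A free chain complex with a chosen basis: basis elements `B` graded by `dim`,
finitely many in each degree, with differential determined by the weights
`w b a` (the coefficient of `a` in `∂ b`), supported in consecutive degrees
and squaring to zero. -/
structure BasedComplex (R : Type u) [CommRing R] : Type (u + 1) where
  B : Type u
  [deceq : DecidableEq B]
  dim : B → ℤ
  [fin : ∀ n : ℤ, Fintype {b : B // dim b = n}]
  w : B → B → R
  w_dim : ∀ b a, w b a ≠ 0 → dim a = dim b - 1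
  dsq : ∀ b z : B, (∑ y : {y : B // dim y = dim b - 1}, w b (y : B) * w (y : B) z) = 0

attribute [instance] BasedComplex.deceq BasedComplex.fin

variable {R : Type u} [CommRing R]

/-- The chain complex is bounded on the right (degrees bounded below). -/
def BasedComplex.BoundedBelow (C : BasedComplex R) : Prop :=
  ∃ N : ℤ, ∀ b : C.B, N ≤ C.dim b

/-- A partial matching on the basis: a set of pairs `(a, b)` with `b` of one higher
degree, invertible weight `w b a`, and all members of all pairs pairwise distinct. -/
def IsMatching (C : BasedComplex R) (M : Set (C.B × C.B)) : Prop :=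
  (∀ p ∈ M, C.dim p.2 = C.dim p.1 + 1 ∧ IsUnit (C.w p.2 p.1)) ∧
  (∀ p ∈ M, ∀ q ∈ M, p ≠ q → p.1 ≠ q.1 ∧ p.1 ≠ q.2 ∧ p.2 ≠ q.1 ∧ p.2 ≠ q.2)

/-- A basis element is critical if it appears in no matched pair. -/
def IsCritical (C : BasedComplex R) (M : Set (C.B × C.B)) (x : C.B) : Prop :=
  ∀ p ∈ M, p.1 ≠ x ∧ p.2 ≠ x

/-- Existence of an alternating cycle `d(b₁) ≺ b₁ ≻ d(b₂) ≺ ⋯ ≺ bₙ ≻ d(b₁)`,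
`n ≥ 2`, with distinct matched pairs `(d(bᵢ), bᵢ) ∈ M`, with respect to a weight
function `w` (nonzero weight plays the role of the covering relation). -/
def HasAltCycleW {B : Type u} (w : B → B → R) (M : Set (B × B)) : Prop :=
  ∃ n : ℕ, ∃ f : Fin (n + 2) → B × B, Function.Injective f ∧
    (∀ i, f i ∈ M) ∧ ∀ i, w (f i).2 (f (i + 1)).1 ≠ 0

/-- An acyclic matching: a partial matching admitting no alternating cycle. -/
def IsAcyclicMatching (C : BasedComplex R) (M : Set (C.B × C.B)) : Prop :=
  IsMatching C M ∧ ¬ HasAltCycleW C.w M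

/-- The weight of an alternating path `s ≻ a₁ ≺ b₁ ≻ a₂ ≺ b₂ ≻ ⋯ ≺ bₙ ≻ t`
(encoded by its list of intermediate matched pairs `(aᵢ, bᵢ)`), namely
`(-1)ⁿ ∏ w(down-edges) / ∏ w(matching edges)`. -/
noncomputable def pathWeightW {B : Type u} (w : B → B → R) : B → List (B × B) → B → R
  | s, [], t => w s t
  | s, p :: L, t => -(w s p.1) * Ring.inverse (w p.2 p.1) * pathWeightW w p.2 L t

open Classical in
/-- The Morse-differential coefficient from `s` to `t`: the sum of the weights of all
alternating paths from `s` to `t` whose intermediate pairs are distinct members of `M`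
(paths through pairs of the wrong degrees have weight `0`). -/
noncomputable def morseCoeffW (C : BasedComplex R) (w' : C.B → C.B → R)
    (M : Set (C.B × C.B)) (s t : C.B) : R :=
  ∑ k ∈ Finset.range
      (Fintype.card ({a : C.B // C.dim a = C.dim s - 1} × {b : C.B // C.dim b = C.dim s}) + 1),
    ∑ f : Fin k → {a : C.B // C.dim a = C.dim s - 1} × {b : C.B // C.dim b = C.dim s},
      if Function.Injective f ∧ ∀ i, (((f i).1 : C.B), ((f i).2 : C.B)) ∈ M then
        pathWeightW w' s (List.ofFn fun i => (((f i).1 : C.B), ((f i).2 : C.B))) t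
      else 0

/-- The Morse-differential coefficient `∑_p w(p)` with the weights of `C` itself. -/
noncomputable def morseCoeff (C : BasedComplex R) (M : Set (C.B × C.B)) (s t : C.B) : R :=
  morseCoeffW C C.w M s t
/-- Chains in the complex, as coefficient functions on the basis (each degree has
finitely many basis elements). -/
noncomputable def BasedComplex.bdF (C : BasedComplex R) : (C.B → R) →ₗ[R] (C.B → R) :=
  LinearMap.pi fun a =>
    ∑ b : {b : C.B // C.dim b = C.dim a + 1}, C.w (b : C.B) a • LinearMap.proj (R := R) (b : C.B)

/-- The submodule of chains of degree `n`. -/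
def BasedComplex.degF (C : BasedComplex R) (n : ℤ) : Submodule R (C.B → R) :=
  { carrier := {x | ∀ b : C.B, C.dim b ≠ n → x b = 0}
    add_mem' := fun hx hy b hb => by simp [hx b hb, hy b hb]
    zero_mem' := fun b _ => rfl
    smul_mem' := fun c x hx b hb => by simp [hx b hb] }

/-- Homology of `C` in degree `n`: degree-`n` cycles modulo boundaries of
degree-`(n+1)` chains. -/
noncomputable abbrev BasedComplex.homologyAt (C : BasedComplex R) (n : ℤ) :=
  ↥(C.degF n ⊓ LinearMap.ker C.bdF) ⧸
    Submodule.comap (C.degF n ⊓ LinearMap.ker C.bdF).subtype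
      (Submodule.map C.bdF (C.degF (n + 1)))

open Classical in
/-- The boundary operator of the Morse complex, on chains generated by the critical
cells, with matrix entries the Morse coefficients `∑_p w(p)`. -/
noncomputable def morseBdF (C : BasedComplex R) (M : Set (C.B × C.B)) :
    ({b : C.B // IsCritical C M b} → R) →ₗ[R] ({b : C.B // IsCritical C M b} → R) :=
  LinearMap.pi fun t =>
    ∑ s : {s : C.B // C.dim s = C.dim (t : C.B) + 1},
      if h : IsCritical C M (s : C.B) then
        morseCoeff C M (s : C.B) (t : C.B) •
          LinearMap.proj (R := R) (⟨(s : C.B), h⟩ : {b : C.B // IsCritical C M b})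
      else 0

/-- Degree-`n` part of the Morse complex. -/
def morseDegF (C : BasedComplex R) (M : Set (C.B × C.B)) (n : ℤ) :
    Submodule R ({b : C.B // IsCritical C M b} → R) :=
  { carrier := {x | ∀ s : {b : C.B // IsCritical C M b}, C.dim (s : C.B) ≠ n → x s = 0}
    add_mem' := fun hx hy s hs => by simp [hx s hs, hy s hs]
    zero_mem' := fun s _ => rfl
    smul_mem' := fun c x hx s hs => by simp [hx s hs] }

/-- Homology of the Morse complex in degree `n`. -/
noncomputable abbrev morseHomologyAt (C : BasedComplex R) (M : Set (C.B × C.B)) (n : ℤ) :=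
  ↥(morseDegF C M n ⊓ LinearMap.ker (morseBdF C M)) ⧸
    Submodule.comap (morseDegF C M n ⊓ LinearMap.ker (morseBdF C M)).subtype
      (Submodule.map (morseBdF C M) (morseDegF C M (n + 1)))

/-!
In degree `n`, index by the matched pairs `(a, b)` with `a` of degree `n` the square matrix `A`
whose entry `A q p` is the coefficient of `q.1` in `∂ p.2`. Its diagonal consists of the
invertible matching weights, and acyclicity of the matching says exactly that its off-diagonal
support is a well-founded relation: `A` is triangular with unit diagonal, hence invertible.
For a degree-`n` cycle `x`, surjectivity of `A` yields a chain `y` on upper cells with `∂ y = x`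
on the lower cells of degree `n`. Then `z = x - ∂ y` is a cycle vanishing on lower cells; as
every cell is matched, `z` lives on the upper cells of the pairs one degree down, and injectivity
of their matrix together with `∂ z = 0` forces `z = 0`.
-/

theorem Finite.wellFounded_of_forall_not_cycle {α : Type*} [Finite α] {r : α → α → Prop}
    (h : ∀ (n : ℕ) (f : Fin (n + 1) → α), Function.Injective f → ¬ ∀ i, r (f i) (f (i + 1))) :
    WellFounded r := by
  classical
  rw [wellFounded_iff_isEmpty_descending_chain]
  refine ⟨fun ⟨F, hF⟩ => ?_⟩
  have hrep : ∃ j i, i < j ∧ F i = F j := by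
    obtain ⟨i, j, hij, hF⟩ := Finite.exists_ne_map_eq_of_infinite F
    rcases lt_or_gt_of_ne hij with hlt | hlt
    exacts [⟨j, i, hlt, hF⟩, ⟨i, j, hlt, hF.symm⟩]
  -- the first repetition `F i = F j` closes a cycle through pairwise distinct `F i, …, F (j - 1)`
  obtain ⟨j, ⟨i, hij, hFij⟩, hdistinct⟩ :
      ∃ j, (∃ i < j, F i = F j) ∧ ∀ s t, s < t → t < j → F s ≠ F t :=
    ⟨Nat.find hrep, Nat.find_spec hrep,
      fun s t hst htj hFst => Nat.find_min hrep htj ⟨s, hst, hFst⟩⟩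
  obtain ⟨n, rfl⟩ : ∃ n, j = i + n + 1 := ⟨j - i - 1, by omega⟩
  refine h n (fun k => F (i + n - k)) (fun k l hkl => ?_) (fun k => ?_)
  · by_contra hne
    rcases lt_or_gt_of_ne (Fin.val_ne_of_ne hne) with hlt | hlt
    · exact hdistinct _ _ (by omega) (by omega) hkl.symm
    · exact hdistinct _ _ (by omega) (by omega) hkl
  · rw [Fin.val_add_one]
    split_ifs with hk
    · simpa [hk, ← hFij] using hF (i + n)
    · have hk' : (k : ℕ) < n := Fin.val_lt_last hk
      simpa [show i + n - k = i + n - (k + 1) + 1 by omega] using hF (i + n - (k + 1))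

theorem Matrix.mulVec_surjective_of_wellFounded {ι S : Type*} [Fintype ι] [DecidableEq ι]
    [Ring S] (A : Matrix ι ι S) (hdiag : ∀ i, IsUnit (A i i))
    (hwf : WellFounded fun j i => j ≠ i ∧ A i j ≠ 0) : Function.Surjective A.mulVec := by
  classical
  intro x
  -- Solve the triangular system `∑ j, A i j * c j = x i` for `c i`, by recursion along `hwf`.
  let c : ι → S := hwf.fix fun i c' => Ring.inverse (A i i) *
    (x i - ∑ j, if h : j ≠ i ∧ A i j ≠ 0 then A i j * c' j h else 0)
  have hc : ∀ i, c i = Ring.inverse (A i i) *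
      (x i - ∑ j, if j ≠ i ∧ A i j ≠ 0 then A i j * c j else 0) := fun i =>
    hwf.fix_eq _ i
  have hoff : ∀ i, (∑ j, if j ≠ i ∧ A i j ≠ 0 then A i j * c j else 0) =
      ∑ j ∈ univ.erase i, A i j * c j := fun i => by
    rw [← Finset.sum_erase univ (a := i) (if_neg fun h => h.1 rfl)]
    refine Finset.sum_congr rfl fun j hj => ?_
    by_cases hAij : A i j = 0 <;> simp [hAij, Finset.ne_of_mem_erase hj]
  refine ⟨c, funext fun i => ?_⟩
  rw [Matrix.mulVec, dotProduct, ← Finset.add_sum_erase _ _ (mem_univ i), hc i,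
    Ring.mul_inverse_cancel_left _ _ (hdiag i), hoff i, sub_add_cancel]

theorem Matrix.mulVec_injective_of_wellFounded {ι S : Type*} [Fintype ι] [DecidableEq ι]
    [CommRing S] (A : Matrix ι ι S) (hdiag : ∀ i, IsUnit (A i i))
    (hwf : WellFounded fun j i => j ≠ i ∧ A i j ≠ 0) : Function.Injective A.mulVec :=
  Matrix.mulVec_injective_of_isUnit <|
    Matrix.mulVec_surjective_iff_isUnit.mp (A.mulVec_surjective_of_wellFounded hdiag hwf)

namespace BasedComplex

variable (C : BasedComplex R)

lemma bdF_apply (x : C.B → R) (a : C.B) :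
    C.bdF x a = ∑ b : {b : C.B // C.dim b = C.dim a + 1}, C.w b a * x b := by
  simp [bdF]

lemma bdF_single (b a : C.B) (r : R) : C.bdF (Pi.single b r) a = C.w b a * r := by
  rw [bdF_apply]
  by_cases hb : C.dim b = C.dim a + 1
  · rw [Fintype.sum_eq_single ⟨b, hb⟩ fun b' hb' => by
      rw [Pi.single_eq_of_ne (fun h => hb' (Subtype.ext h)), mul_zero]]
    simp
  · have hw : C.w b a = 0 := by_contra fun hw => hb (by have := C.w_dim b a hw; omega)
    rw [hw, zero_mul]
    exact Finset.sum_eq_zero fun b' _ => by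
      rw [Pi.single_eq_of_ne (fun h : (b' : C.B) = b => hb (h ▸ b'.2)), mul_zero]

lemma sum_dim_congr (f : C.B → R) {m m' : ℤ} (h : m = m') :
    ∑ b : {b : C.B // C.dim b = m}, f b = ∑ b : {b : C.B // C.dim b = m'}, f b := by
  subst h; rfl

lemma bdF_bdF (x : C.B → R) : C.bdF (C.bdF x) = 0 := by
  funext a
  have hinner : ∀ b : {b : C.B // C.dim b = C.dim a + 1}, C.w b a * C.bdF x b =
      ∑ c : {c : C.B // C.dim c = C.dim a + 2}, C.w c b * C.w b a * x c := fun b => by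
    have hdeg : C.dim b + 1 = C.dim a + 2 := by have := b.2; omega
    rw [bdF_apply, C.sum_dim_congr (fun c => C.w c b * x c) hdeg, mul_sum]
    exact sum_congr rfl fun c _ => by ring
  have hdsq : ∀ c : {c : C.B // C.dim c = C.dim a + 2},
      ∑ b : {b : C.B // C.dim b = C.dim a + 1}, C.w c b * C.w b a = 0 := fun c => by
    have hdeg : C.dim a + 1 = C.dim c - 1 := by have := c.2; omega
    rw [← C.dsq c a, C.sum_dim_congr (fun b => C.w c b * C.w b a) hdeg]
  rw [bdF_apply, Pi.zero_apply, sum_congr rfl fun b _ => hinner b, sum_comm]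
  exact sum_eq_zero fun c _ => by rw [← sum_mul, hdsq c, zero_mul]

lemma bdF_mem_degF {n : ℤ} {y : C.B → R} (hy : y ∈ C.degF (n + 1)) : C.bdF y ∈ C.degF n :=
  fun a ha => by
    rw [bdF_apply]
    exact Finset.sum_eq_zero fun b _ => by rw [hy b (by omega), mul_zero]

end BasedComplex

section Matching

variable {C : BasedComplex R} {M : Set (C.B × C.B)}

lemma IsMatching.eq_of_mem {p q : C.B × C.B} (hM : IsMatching C M) (hp : p ∈ M) (hq : q ∈ M)
    {x : C.B} (hpx : p.1 = x ∨ p.2 = x) (hqx : q.1 = x ∨ q.2 = x) : p = q := by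
  by_contra hne
  obtain ⟨h11, h12, h21, h22⟩ := hM.2 p hp q hq hne
  rcases hpx with rfl | rfl <;> rcases hqx with h | h <;> simp_all

variable (C M) in
/-- The degree of `b` is recorded so that finiteness does not depend on `M` being a matching. -/
def MatchedPair (n : ℤ) : Type u :=
  {p : C.B × C.B // p ∈ M ∧ C.dim p.1 = n ∧ C.dim p.2 = n + 1}

instance (n : ℤ) : Finite (MatchedPair C M n) :=
  Finite.of_injective
    (fun p : MatchedPair C M n =>
      ((⟨p.1.1, p.2.2.1⟩ : {a : C.B // C.dim a = n}),
        (⟨p.1.2, p.2.2.2⟩ : {b : C.B // C.dim b = n + 1})))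
    fun _ _ h =>
      Subtype.ext (Prod.ext (congrArg (fun r => r.1.1) h) (congrArg (fun r => r.2.1) h))

noncomputable instance (n : ℤ) : Fintype (MatchedPair C M n) := Fintype.ofFinite _

lemma MatchedPair.ext_snd (hM : IsMatching C M) {n : ℤ} {p q : MatchedPair C M n}
    (h : p.1.2 = q.1.2) : p = q :=
  Subtype.ext (hM.eq_of_mem p.2.1 q.2.1 (Or.inr h) (Or.inr rfl))

variable (C M) in
def matchingMatrix (n : ℤ) : Matrix (MatchedPair C M n) (MatchedPair C M n) R :=
  fun q p => C.w p.1.2 q.1.1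

lemma isUnit_matchingMatrix_diag (hM : IsMatching C M) {n : ℤ} (q : MatchedPair C M n) :
    IsUnit (matchingMatrix C M n q q) :=
  (hM.1 q.1 q.2.1).2

lemma wellFounded_matchingMatrix (hM : IsAcyclicMatching C M) (n : ℤ) :
    WellFounded fun p q : MatchedPair C M n => p ≠ q ∧ matchingMatrix C M n q p ≠ 0 := by
  refine Finite.wellFounded_of_forall_not_cycle fun k f hf hcycle => ?_
  cases k with
  | zero => exact (hcycle 0).1 rfl
  | succ m =>
    exact hM.2 ⟨m, fun i => (f i).1, Subtype.val_injective.comp hf, fun i => (f i).2.1,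
      fun i => (hcycle i).2⟩

lemma bdF_sum_single_snd {n : ℤ} (c : MatchedPair C M n → R) (q : MatchedPair C M n) :
    C.bdF (∑ p, Pi.single p.1.2 (c p)) q.1.1 = (matchingMatrix C M n).mulVec c q := by
  simp only [map_sum, Finset.sum_apply, BasedComplex.bdF_single, Matrix.mulVec, dotProduct,
    matchingMatrix]

lemma sum_single_snd_mem_degF {n : ℤ} (c : MatchedPair C M n → R) :
    ∑ p, Pi.single p.1.2 (c p) ∈ C.degF (n + 1) :=
  Submodule.sum_mem _ fun p _ b hb =>
    Pi.single_eq_of_ne (fun h : b = p.1.2 => hb (h ▸ p.2.2.2)) _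

lemma eq_sum_single_snd (hM : IsMatching C M) (hall : ∀ b : C.B, ¬ IsCritical C M b) {n : ℤ}
    {z : C.B → R} (hz : z ∈ C.degF n) (hfst : ∀ p : MatchedPair C M n, z p.1.1 = 0) :
    z = ∑ p : MatchedPair C M (n - 1), Pi.single p.1.2 (z p.1.2) := by
  have hzero : ∀ b, (∀ p : MatchedPair C M (n - 1), p.1.2 ≠ b) → z b = 0 := fun b hb => by
    by_cases hdim : C.dim b = n
    · obtain ⟨p, hp, hpb⟩ : ∃ p ∈ M, p.1 = b ∨ p.2 = b := by
        simpa [IsCritical, not_and_or, imp_iff_not_or] using hall b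
      have hdp := (hM.1 p hp).1
      rcases hpb with rfl | rfl
      · exact hfst ⟨p, hp, hdim, by omega⟩
      · exact absurd rfl (hb ⟨p, hp, by omega, by omega⟩)
    · exact hz b hdim
  funext b
  rw [Finset.sum_apply]
  by_cases hb : ∃ p : MatchedPair C M (n - 1), p.1.2 = b
  · obtain ⟨p, rfl⟩ := hb
    rw [Fintype.sum_eq_single p fun q hq =>
      Pi.single_eq_of_ne (fun h => hq (MatchedPair.ext_snd hM h.symm)) _, Pi.single_eq_same]
  · rw [not_exists] at hb
    rw [hzero b hb]
    exact (Finset.sum_eq_zero fun p _ => Pi.single_eq_of_ne (Ne.symm (hb p)) _).symm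

lemma exists_bdF_eq_on_fst (hM : IsAcyclicMatching C M) (n : ℤ) (x : C.B → R) :
    ∃ y ∈ C.degF (n + 1), ∀ p : MatchedPair C M n, C.bdF y p.1.1 = x p.1.1 := by
  classical
  obtain ⟨c, hc⟩ := (matchingMatrix C M n).mulVec_surjective_of_wellFounded
    (isUnit_matchingMatrix_diag hM.1) (wellFounded_matchingMatrix hM n) fun p => x p.1.1
  exact ⟨_, sum_single_snd_mem_degF c, fun p => by rw [bdF_sum_single_snd, hc]⟩

lemma eq_zero_of_bdF_eq_zero (hM : IsAcyclicMatching C M) (hall : ∀ b : C.B, ¬ IsCritical C M b)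
    {n : ℤ} {z : C.B → R} (hz : z ∈ C.degF n) (hcycle : C.bdF z = 0)
    (hfst : ∀ p : MatchedPair C M n, z p.1.1 = 0) : z = 0 := by
  classical
  have hsnd : (fun p : MatchedPair C M (n - 1) => z p.1.2) = 0 := by
    refine (matchingMatrix C M (n - 1)).mulVec_injective_of_wellFounded
      (isUnit_matchingMatrix_diag hM.1) (wellFounded_matchingMatrix hM (n - 1)) ?_
    funext q
    rw [Matrix.mulVec_zero, ← bdF_sum_single_snd, ← eq_sum_single_snd hM.1 hall hz hfst, hcycle]
    rfl
  rw [eq_sum_single_snd hM.1 hall hz hfst]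
  exact Finset.sum_eq_zero fun p _ => by rw [congrFun hsnd p, Pi.zero_apply, Pi.single_zero]

end Matching

lemma BasedComplex.subsingleton_homologyAt (C : BasedComplex R) {n : ℤ}
    (h : ∀ x ∈ C.degF n, C.bdF x = 0 → ∃ y ∈ C.degF (n + 1), C.bdF y = x) :
    Subsingleton (C.homologyAt n) := by
  rw [Submodule.Quotient.subsingleton_iff, eq_top_iff]
  rintro ⟨x, hx⟩ -
  obtain ⟨y, hy, rfl⟩ := h x (Submodule.mem_inf.mp hx).1 (Submodule.mem_inf.mp hx).2
  exact Submodule.mem_comap.mpr (Submodule.mem_map_of_mem hy)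

theorem acyclic_of_perfect_matching_general (C : BasedComplex R) (M : Set (C.B × C.B))
    (hM : IsAcyclicMatching C M)
    (hall : ∀ b : C.B, ¬ IsCritical C M b) :
    ∀ n : ℤ, Subsingleton (C.homologyAt n) := by
  intro n
  refine C.subsingleton_homologyAt fun x hx hcycle => ?_
  obtain ⟨y, hy, hyx⟩ := exists_bdF_eq_on_fst hM n x
  refine ⟨y, hy, (sub_eq_zero.mp ?_).symm⟩
  refine eq_zero_of_bdF_eq_zero hM hall (Submodule.sub_mem _ hx (C.bdF_mem_degF hy)) ?_
    fun p => by rw [Pi.sub_apply, hyx, sub_self]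
  rw [map_sub, hcycle, C.bdF_bdF, sub_zero]

/-- If an acyclic matching matches every basis element (there are no critical cells),
then the complex is acyclic: all homology groups vanish. -/
theorem acyclic_of_perfect_matching (C : BasedComplex R) (M : Set (C.B × C.B))
    (hbdd : C.BoundedBelow) (hM : IsAcyclicMatching C M)
    (hall : ∀ b : C.B, ¬ IsCritical C M b) :
    ∀ n : ℤ, Subsingleton (C.homologyAt n) :=
  acyclic_of_perfect_matching_general C M hM hall
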